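/- Let G be a finite group and let A ≤ B ≤ G be subgroups. If A is 𝔑-abnormal in G, then B is 𝔑-abnormal in G and N_G(B) = B. -/

import Mathlib

variable {G : Type*}

/-- `K` is a maximal subgroup of `L`: `K < L` and there is no subgroup strictly between. -/
def IsMaximalSubgroupOf [Group G] (K L : Subgroup G) : Prop :=
  K < L ∧ ∀ M : Subgroup G, K < M → M ≤ L → M = L

/-- The quotient of `L` by the normal core of `K` in `L` is nilpotent. -/
def NilpotentQuotByCore [Group G] (K L : Subgroup G) : Prop :=
  Group.IsNilpotent (↥L ⧸ (K.subgroupOf L).normalCore)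

/-- The quotient of `L` by the normal core of `K` in `L` has nilpotent derived subgroup
(i.e. belongs to the formation `𝔑𝔄`). -/
def NAQuotByCore [Group G] (K L : Subgroup G) : Prop :=
  Group.IsNilpotent ↥(commutator (↥L ⧸ (K.subgroupOf L).normalCore))

/-- `H` is `𝔑`-subnormal in `G`: `H = G` or there is a chain
`H = H₀ <· H₁ <· ... <· Hₙ = G` of maximal subgroups with each `Hᵢ/(Hᵢ₋₁)_{Hᵢ}` nilpotent. -/
def NSubnormal [Group G] (H : Subgroup G) : Prop :=
  H = ⊤ ∨ ∃ (n : ℕ) (c : Fin (n + 1) → Subgroup G),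
    c 0 = H ∧ c (Fin.last n) = ⊤ ∧
    ∀ i : Fin n, IsMaximalSubgroupOf (c i.castSucc) (c i.succ) ∧
      NilpotentQuotByCore (c i.castSucc) (c i.succ)

/-- `H` is `𝔑𝔄`-subnormal in `G`: `H = G` or there is a chain
`H = H₀ <· H₁ <· ... <· Hₙ = G` of maximal subgroups with each `Hᵢ/(Hᵢ₋₁)_{Hᵢ}`
having nilpotent derived subgroup. -/
def NASubnormal [Group G] (H : Subgroup G) : Prop :=
  H = ⊤ ∨ ∃ (n : ℕ) (c : Fin (n + 1) → Subgroup G),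
    c 0 = H ∧ c (Fin.last n) = ⊤ ∧
    ∀ i : Fin n, IsMaximalSubgroupOf (c i.castSucc) (c i.succ) ∧
      NAQuotByCore (c i.castSucc) (c i.succ)

/-- `H` is `𝔑`-abnormal in `G`: for all `K`, `L` with `H ≤ K` and `K` maximal in `L`,
the quotient `L/K_L` is not nilpotent. -/
def NAbnormal [Group G] (H : Subgroup G) : Prop :=
  ∀ K L : Subgroup G, H ≤ K → IsMaximalSubgroupOf K L → ¬ NilpotentQuotByCore K L

/-- `H` is `𝔑𝔄`-abnormal in `G`: for all `K`, `L` with `H ≤ K` and `K` maximal in `L`,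
the quotient `L/K_L` does not have nilpotent derived subgroup. -/
def NAAbnormal [Group G] (H : Subgroup G) : Prop :=
  ∀ K L : Subgroup G, H ≤ K → IsMaximalSubgroupOf K L → ¬ NAQuotByCore K L

/-- `N` is the nilpotent residual `G^𝔑` of `G`: the smallest normal subgroup
with nilpotent quotient. -/
def IsNilpotentResidual [Group G] (N : Subgroup G) : Prop :=
  ∃ hN : N.Normal,
    haveI := hN
    Group.IsNilpotent (G ⧸ N) ∧
      ∀ M : Subgroup G, ∀ hM : M.Normal,
        (haveI := hM; Group.IsNilpotent (G ⧸ M)) → N ≤ M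

/-- `N` is the `𝔑𝔄`-residual `G^{𝔑𝔄}` of `G`: the smallest normal subgroup whose
quotient has nilpotent derived subgroup. -/
def IsNAResidual [Group G] (N : Subgroup G) : Prop :=
  ∃ hN : N.Normal,
    haveI := hN
    Group.IsNilpotent ↥(commutator (G ⧸ N)) ∧
      ∀ M : Subgroup G, ∀ hM : M.Normal,
        (haveI := hM; Group.IsNilpotent ↥(commutator (G ⧸ M))) → N ≤ M

/-- `H` is an `𝔑`-projector of `G`: for every normal `N ⊴ G`, the image `HN/N` is a
maximal nilpotent subgroup of `G/N`. -/
def IsNProjector [Group G] (H : Subgroup G) : Prop :=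
  ∀ N : Subgroup G, ∀ hN : N.Normal,
    haveI := hN
    Group.IsNilpotent ↥(H.map (QuotientGroup.mk' N)) ∧
      ∀ K : Subgroup (G ⧸ N), Group.IsNilpotent ↥K →
        H.map (QuotientGroup.mk' N) ≤ K → K = H.map (QuotientGroup.mk' N)

/-! A proper subgroup `B` of its normalizer lies maximally in some `L ≤ N_G(B)`; then `B ⊴ L`
and `L/B` has no subgroups besides `1` and `L/B`, so it is cyclic. Hence `L/B_L = L/B` is
nilpotent, contradicting `𝔑`-abnormality of `B`, which is inherited from `A ≤ B`. -/

theorem isCyclic_of_isSimpleOrder_subgroup {Q : Type*} [Group Q] [IsSimpleOrder (Subgroup Q)] :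
    IsCyclic Q := by
  nontriviality Q
  obtain ⟨g, hg⟩ := exists_ne (1 : Q)
  have hg_top : Subgroup.zpowers g = ⊤ :=
    (IsSimpleOrder.eq_bot_or_eq_top _).resolve_left (Subgroup.zpowers_ne_bot.2 hg)
  exact ⟨⟨g, (Subgroup.eq_top_iff' _).1 hg_top⟩⟩

theorem QuotientGroup.isSimpleOrder_subgroup_of_isCoatom {Q : Type*} [Group Q] {N : Subgroup Q}
    [N.Normal] (hN : IsCoatom N) : IsSimpleOrder (Subgroup (Q ⧸ N)) :=
  have := Set.isSimpleOrder_Ici_iff_isCoatom.mpr hN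
  (show Subgroup (Q ⧸ N) ≃o Set.Ici N from comapMk'OrderIso N).isSimpleOrder

section

variable [Group G] {K L : Subgroup G}

theorem isMaximalSubgroupOf_iff_covBy : IsMaximalSubgroupOf K L ↔ K ⋖ L :=
  ⟨fun h => ⟨h.1, fun M hKM hML => hML.ne (h.2 M hKM hML.le)⟩,
    fun h => ⟨h.1, fun _ hKM hML => by_contra fun hne => h.2 hKM (hML.lt_of_ne hne)⟩⟩

theorem IsMaximalSubgroupOf.isCoatom_subgroupOf (h : IsMaximalSubgroupOf K L) :
    IsCoatom (K.subgroupOf L) := by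
  refine ⟨fun hK => h.1.not_ge (Subgroup.subgroupOf_eq_top.mp hK), fun M hKM => ?_⟩
  rw [← Subgroup.map_subtype_lt_map_subtype, Subgroup.map_subgroupOf_eq_of_le h.1.le] at hKM
  rw [← Subgroup.map_subtype_inj, h.2 _ hKM (Subgroup.map_subtype_le M),
    ← MonoidHom.range_eq_map, Subgroup.range_subtype]

theorem IsMaximalSubgroupOf.nilpotentQuotByCore_of_le_normalizer (h : IsMaximalSubgroupOf K L)
    (hL : L ≤ Subgroup.normalizer (K : Set G)) : NilpotentQuotByCore K L := by
  have : (K.subgroupOf L).Normal := (Subgroup.normal_subgroupOf_iff_le_normalizer h.1.le).mpr hL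
  have := QuotientGroup.isSimpleOrder_subgroup_of_isCoatom h.isCoatom_subgroupOf
  let := (isCyclic_of_isSimpleOrder_subgroup (Q := L ⧸ K.subgroupOf L)).commGroup
  exact Group.nilpotent_of_mulEquiv
    (QuotientGroup.quotientMulEquivOfEq (Subgroup.normalCore_eq_self _).symm)

theorem NAbnormal.mono {A B : Subgroup G} (hA : NAbnormal A) (hAB : A ≤ B) : NAbnormal B :=
  fun K L hBK => hA K L (hAB.trans hBK)

theorem NAbnormal.normalizer_eq [Finite G] {B : Subgroup G} (hB : NAbnormal B) :
    Subgroup.normalizer (B : Set G) = B := by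
  obtain hlt | heq := B.le_normalizer.lt_or_eq
  · obtain ⟨L, hBL, hLN⟩ := exists_covBy_le_of_lt hlt
    have hmax := isMaximalSubgroupOf_iff_covBy.mpr hBL
    exact (hB B L le_rfl hmax (hmax.nilpotentQuotByCore_of_le_normalizer hLN)).elim
  · exact heq.symm

end

theorem stmt_13 [Group G] [Finite G] (A B : Subgroup G) (hAB : A ≤ B)
    (hA : NAbnormal A) :
    NAbnormal B ∧ Subgroup.normalizer (B : Set G) = B :=
  ⟨hA.mono hAB, (hA.mono hAB).normalizer_eq⟩
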